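/- arXiv:2506.19485 — 4 statements merged into one kernel-verified Lean document; each statement's English description precedes it below -/
import Mathlib

section
/- Let d, s, k, m, V be positive integers with d ≥ 1, k ≤ s, k ≤ m and s ≤ V. Then (V choose s) · (m choose k)^d · (k/m)^(d·s) ≤ exp( −s·( d·(1 − k/s)·log(m/k) − log(V/s) − 2d ) ), where k/s, m/k, V/s and k/m are real quotients. -/
/-!
Bound both binomial coefficients by `(e n / k) ^ k` and write everything as one exponential.
The `log (m / k)` terms then cancel exactly, and what remains is the slack `s + d k ≤ 2 d s`,
which holds because `d ≥ 1` and `k ≤ s`.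
-/

open Real
open scoped Nat

lemma pow_le_exp_mul_log {x : ℝ} (hx : 0 ≤ x) (n : ℕ) : x ^ n ≤ exp (n * log x) := by
  rcases hx.eq_or_lt with rfl | hx
  · rcases n.eq_zero_or_pos with rfl | hn
    · simp
    · rw [zero_pow hn.ne']
      positivity
  · rw [exp_nat_mul, exp_log hx]

/-- The junk values `log 0 = 0` and `n / 0 = 0` keep this true for all `n` and `k`. -/
lemma Nat.cast_choose_le_exp (n k : ℕ) :
    (n.choose k : ℝ) ≤ Real.exp (k * Real.log ((n : ℝ) / k) + k) := by
  rcases k.eq_zero_or_pos with rfl | hk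
  · simp
  have hk0 : (0 : ℝ) < k := by exact_mod_cast hk
  calc (n.choose k : ℝ) ≤ (n : ℝ) ^ k / k ! := choose_le_pow_div k n
    _ = ((n : ℝ) / k) ^ k * ((k : ℝ) ^ k / k !) := by
      rw [div_pow, mul_div, div_mul_cancel₀ _ (by positivity)]
    _ ≤ Real.exp (k * Real.log ((n : ℝ) / k)) * Real.exp k := by
      gcongr
      · exact pow_le_exp_mul_log (by positivity) k
      · exact Real.pow_div_factorial_le_exp _ hk0.le k
    _ = Real.exp (k * Real.log ((n : ℝ) / k) + k) := (Real.exp_add _ _).symm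

theorem union_bound_counting_general (d s k m V : ℕ) (hd : 1 ≤ d)
    (hs : 0 < s) (hks : k ≤ s) :
    (V.choose s : ℝ) * (m.choose k : ℝ) ^ d * ((k : ℝ) / m) ^ (d * s) ≤
      Real.exp (-(s : ℝ) *
        ((d : ℝ) * (1 - (k : ℝ) / s) * Real.log ((m : ℝ) / k)
          - Real.log ((V : ℝ) / s) - 2 * d)) := by
  have hslack : (s + d * k : ℝ) ≤ 2 * d * s := by
    exact_mod_cast (by nlinarith : s + d * k ≤ 2 * d * s)
  have hsk : (s : ℝ) * (k / s) = k := mul_div_cancel₀ _ (by positivity)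
  calc (V.choose s : ℝ) * (m.choose k : ℝ) ^ d * ((k : ℝ) / m) ^ (d * s)
      ≤ exp (s * log ((V : ℝ) / s) + s) * exp (k * log ((m : ℝ) / k) + k) ^ d
          * exp ((d * s : ℕ) * log ((k : ℝ) / m)) := by
        gcongr
        · exact Nat.cast_choose_le_exp V s
        · exact Nat.cast_choose_le_exp m k
        · exact pow_le_exp_mul_log (by positivity) _
    _ = exp (s * log ((V : ℝ) / s) + s + d * (k * log ((m : ℝ) / k) + k)
          - d * s * log ((m : ℝ) / k)) := by
        have hlog : log ((k : ℝ) / m) = -log ((m : ℝ) / k) := by rw [← log_inv, inv_div]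
        rw [← exp_nat_mul, ← exp_add, ← exp_add, hlog]
        push_cast
        congr 1
        ring
    _ ≤ _ := by
        rw [exp_le_exp]
        linear_combination hslack - d * log ((m : ℝ) / k) * hsk

/-- The core counting estimate in the proof of the strip-covering proposition. -/
theorem union_bound_counting (d s k m V : ℕ) (hd : 1 ≤ d)
    (hs : 0 < s) (hk : 0 < k) (hm : 0 < m) (hV : 0 < V)
    (hks : k ≤ s) (hkm : k ≤ m) (hsV : s ≤ V) :
    (V.choose s : ℝ) * (m.choose k : ℝ) ^ d * ((k : ℝ) / m) ^ (d * s) ≤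
      Real.exp (-(s : ℝ) *
        ((d : ℝ) * (1 - (k : ℝ) / s) * Real.log ((m : ℝ) / k)
          - Real.log ((V : ℝ) / s) - 2 * d)) :=
  union_bound_counting_general d s k m V hd hs hks
end

section
/- Let d, s, k, m, V be positive integers with d ≥ 1, 2k ≤ s, k ≤ m and s ≤ V, and suppose (m/k)^(d/2) ≥ e^(2d+1) · (V/s) (real quotients and powers). Then (V choose s) · (m choose k)^d · (k/m)^(d·s) ≤ e^(−s). -/
/-!
Bound both binomial coefficients by `C(n, k) ≤ (e n / k)^k`. Since `2k ≤ s` and `e m / k ≥ 1`,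
the factor `C(m, k)^d (k/m)^(ds)` is at most `(e k / m)^(ds/2)`, so the whole product is at most
the `s`-th power of `e (V/s) (e k/m)^(d/2)`, which the regime hypothesis bounds by
`e^(1 + d/2 - (2d+1)) = e^(-3d/2) ≤ e^(-1)`.
-/

open Real

theorem choose_le_exp_one_mul_div_pow (n k : ℕ) :
    (n.choose k : ℝ) ≤ (exp 1 * n / k) ^ k := by
  rcases k.eq_zero_or_pos with rfl | hk
  · simp
  have hkR : (0 : ℝ) < k := by exact_mod_cast hk
  calc (n.choose k : ℝ) ≤ (n : ℝ) ^ k / k.factorial := Nat.choose_le_pow_div k n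
    _ = ((n : ℝ) / k) ^ k * ((k : ℝ) ^ k / k.factorial) := by
        rw [div_pow]; field_simp
    _ ≤ ((n : ℝ) / k) ^ k * exp k := by
        gcongr
        exact pow_div_factorial_le_exp (k : ℝ) k.cast_nonneg k
    _ = (exp 1 * n / k) ^ k := by
        rw [← exp_one_pow, mul_div_assoc, mul_pow, mul_comm]

theorem choose_pow_mul_div_pow_le {d s k m : ℕ} (hk : 0 < k) (hks : 2 * k ≤ s) (hkm : k ≤ m) :
    (m.choose k : ℝ) ^ d * ((k : ℝ) / m) ^ (d * s) ≤ ((exp 1 * k / m) ^ ((d : ℝ) / 2)) ^ s := by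
  have hkR : (0 : ℝ) < k := by exact_mod_cast hk
  have hkmR : (k : ℝ) ≤ m := by exact_mod_cast hkm
  have hmR : (0 : ℝ) < m := hkR.trans_le hkmR
  have hbase : 1 ≤ exp 1 * m / k := by
    rw [mul_div_assoc]
    exact one_le_mul_of_one_le_of_one_le (one_le_exp zero_le_one) ((one_le_div hkR).mpr hkmR)
  set t : ℝ := (d : ℝ) / 2 * s
  have hexp : ((k * d : ℕ) : ℝ) ≤ t := by
    have : (2 * k : ℝ) ≤ s := by exact_mod_cast hks
    push_cast; unfold t; nlinarith [(d.cast_nonneg : (0 : ℝ) ≤ d)]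
  have hsq : ((k : ℝ) / m) ^ (d * s) = (((k : ℝ) / m) ^ 2) ^ t := by
    rw [← rpow_natCast ((k : ℝ) / m) 2, ← rpow_mul (by positivity), ← rpow_natCast]
    unfold t; push_cast; ring_nf
  calc (m.choose k : ℝ) ^ d * ((k : ℝ) / m) ^ (d * s)
      ≤ ((exp 1 * m / k) ^ k) ^ d * ((k : ℝ) / m) ^ (d * s) := by
        gcongr; exact choose_le_exp_one_mul_div_pow m k
    _ = (exp 1 * m / k) ^ ((k * d : ℕ) : ℝ) * (((k : ℝ) / m) ^ 2) ^ t := by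
        rw [hsq, rpow_natCast, pow_mul]
    _ ≤ (exp 1 * m / k) ^ t * (((k : ℝ) / m) ^ 2) ^ t :=
        mul_le_mul_of_nonneg_right (rpow_le_rpow_of_exponent_le hbase hexp) (by positivity)
    _ = ((exp 1 * k / m) ^ ((d : ℝ) / 2)) ^ s := by
        rw [← mul_rpow (by positivity) (by positivity), ← rpow_natCast (_ ^ ((d : ℝ) / 2)) s,
          ← rpow_mul (by positivity)]
        congr 1
        field_simp

theorem exp_one_mul_mul_div_rpow_le_exp_neg_one {d : ℕ} {x y : ℝ} (hd : 1 ≤ d) (hx : 0 < x)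
    (hreg : exp (2 * d + 1) * y ≤ x ^ ((d : ℝ) / 2)) :
    exp 1 * y * (exp 1 / x) ^ ((d : ℝ) / 2) ≤ exp (-1) := by
  have hxd : 0 < x ^ ((d : ℝ) / 2) := by positivity
  have hdR : (1 : ℝ) ≤ d := by exact_mod_cast hd
  rw [← le_div_iff₀' (exp_pos _)] at hreg
  rw [div_rpow (exp_pos 1).le hx.le, exp_one_rpow]
  calc exp 1 * y * (exp ((d : ℝ) / 2) / x ^ ((d : ℝ) / 2))
      ≤ exp 1 * (x ^ ((d : ℝ) / 2) / exp (2 * d + 1)) *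
          (exp ((d : ℝ) / 2) / x ^ ((d : ℝ) / 2)) := by
        gcongr
    _ = exp (-(3 * d / 2)) := by
        field_simp
        rw [← exp_add, ← exp_add]; congr 1; ring
    _ ≤ exp (-1) := by gcongr; linarith

theorem union_bound_counting_exp_general (d s k m V : ℕ) (hd : 1 ≤ d)
    (hk : 0 < k)
    (hks : 2 * k ≤ s) (hkm : k ≤ m)
    (hreg : Real.exp (2 * d + 1) * ((V : ℝ) / s) ≤ ((m : ℝ) / k) ^ ((d : ℝ) / 2)) :
    (V.choose s : ℝ) * (m.choose k : ℝ) ^ d * ((k : ℝ) / m) ^ (d * s) ≤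
      Real.exp (-(s : ℝ)) := by
  have hkR : (0 : ℝ) < k := by exact_mod_cast hk
  have hmR : (0 : ℝ) < m := hkR.trans_le (by exact_mod_cast hkm)
  calc (V.choose s : ℝ) * (m.choose k : ℝ) ^ d * ((k : ℝ) / m) ^ (d * s)
      = (V.choose s : ℝ) * ((m.choose k : ℝ) ^ d * ((k : ℝ) / m) ^ (d * s)) := mul_assoc _ _ _
    _ ≤ (exp 1 * V / s) ^ s * ((exp 1 * k / m) ^ ((d : ℝ) / 2)) ^ s :=
        mul_le_mul (choose_le_exp_one_mul_div_pow V s) (choose_pow_mul_div_pow_le hk hks hkm)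
          (by positivity) (by positivity)
    _ = (exp 1 * (V / s) * (exp 1 / ((m : ℝ) / k)) ^ ((d : ℝ) / 2)) ^ s := by
        rw [← mul_pow, mul_div_assoc, div_div_eq_mul_div]
    _ ≤ exp (-1) ^ s :=
        pow_le_pow_left₀ (by positivity)
          (exp_one_mul_mul_div_rpow_le_exp_neg_one hd (by positivity) hreg) s
    _ = exp (-s) := by
        rw [← exp_nat_mul]; ring_nf

/-- Quantitative corollary of the core counting estimate: in the regime
`(m/k)^(d/2) ≥ e^(2d+1)·(V/s)`, the union-bound probability is at most `e^(−s)`. -/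
theorem union_bound_counting_exp (d s k m V : ℕ) (hd : 1 ≤ d)
    (hs : 0 < s) (hk : 0 < k) (hm : 0 < m) (hV : 0 < V)
    (hks : 2 * k ≤ s) (hkm : k ≤ m) (hsV : s ≤ V)
    (hreg : Real.exp (2 * d + 1) * ((V : ℝ) / s) ≤ ((m : ℝ) / k) ^ ((d : ℝ) / 2)) :
    (V.choose s : ℝ) * (m.choose k : ℝ) ^ d * ((k : ℝ) / m) ^ (d * s) ≤
      Real.exp (-(s : ℝ)) :=
  union_bound_counting_exp_general d s k m V hd hk hks hkm hreg
end

section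
/- Let d, n, m, s, k be positive integers with k ≤ m and s ≤ n, and let μ be the product, over all pairs (t, i) with t ∈ {1, …, n} and i ∈ {1, …, d}, of the uniform probability measure on [0,1); write a sample point as x = (x_{t,i}). Then the μ-measure of the set of x for which there exists a subset T ⊆ {1, …, n} with |T| = s such that for every coordinate i ∈ {1, …, d} the set of strip indices {⌊m · x_{t,i}⌋ : t ∈ T} has at most k elements, is at most (n choose s) · (m choose k)^d · (k/m)^(d·s). -/
/-!
Union bound. Almost surely every coordinate lies in `[0,1)`, so its strip index lies in
`{0, …, m-1}`; if the points of `T` meet at most `k` strips in each coordinate, we may enlarge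
these strip sets to a choice `S` of exactly `k` strips per coordinate. For fixed `T` and `S`,
independence of the coordinates gives probability `(k/m)^(d·s)`, and there are
`(n choose s)·(m choose k)^d` pairs `(T, S)`.
-/

open MeasureTheory Set

open scoped ENNReal

theorem volume_preimage_floor (S : Finset ℤ) :
    volume (Int.floor ⁻¹' (S : Set ℤ) : Set ℝ) = S.card := by
  rw [← sum_measure_preimage_singleton S fun a _ =>
    Int.measurable_floor (measurableSet_singleton a)]
  simp [Int.preimage_floor_singleton]

theorem floor_mul_mem_Ico_iff {m : ℕ} (hm : 0 < m) {u : ℝ} :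
    ⌊(m : ℝ) * u⌋ ∈ Finset.Ico (0 : ℤ) m ↔ u ∈ Ico (0 : ℝ) 1 := by
  have hm' : (0 : ℝ) < m := by exact_mod_cast hm
  rw [Finset.mem_Ico, Int.floor_nonneg, Int.floor_lt, mem_Ico]
  push_cast
  rw [mul_nonneg_iff_of_pos_left hm', mul_lt_iff_lt_one_right hm']

theorem volume_restrict_Ico_floor_mul_mem {m : ℕ} (hm : 0 < m) {S : Finset ℤ}
    (hS : S ⊆ Finset.Ico 0 m) :
    volume.restrict (Ico (0 : ℝ) 1) {u | ⌊(m : ℝ) * u⌋ ∈ S} = S.card / m := by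
  have hm' : (0 : ℝ) < m := by exact_mod_cast hm
  have hsub : {u : ℝ | ⌊(m : ℝ) * u⌋ ∈ S} ⊆ Ico 0 1 := fun u hu =>
    (floor_mul_mem_Ico_iff hm).1 (hS hu)
  have hpre : {u : ℝ | ⌊(m : ℝ) * u⌋ ∈ S} =
      ((m : ℝ) * ·) ⁻¹' (Int.floor ⁻¹' (S : Set ℤ)) := rfl
  rw [Measure.restrict_eq_self _ hsub, hpre, Real.volume_preimage_mul_left hm'.ne',
    volume_preimage_floor, abs_inv, abs_of_pos hm', ENNReal.ofReal_inv_of_pos hm',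
    ENNReal.ofReal_natCast, div_eq_mul_inv, mul_comm]

theorem measure_pi_setOf_forall_mem {ι κ α : Type*} [Fintype ι] [Fintype κ]
    [MeasurableSpace α] (ν : Measure α) [IsProbabilityMeasure ν] (T : Finset ι)
    (A : κ → Set α) :
    Measure.pi (fun _ : ι × κ => ν) {x | ∀ t ∈ T, ∀ i, x (t, i) ∈ A i} =
      (∏ i, ν (A i)) ^ T.card := by
  classical
  have hpi : {x : ι × κ → α | ∀ t ∈ T, ∀ i, x (t, i) ∈ A i} =
      univ.pi fun j => if j.1 ∈ T then A j.2 else univ := by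
    ext x
    simp only [mem_ofPred_eq, mem_univ_pi, Prod.forall]
    refine forall_congr' fun t => ?_
    split_ifs with ht <;> simp [ht]
  rw [hpi, Measure.pi_pi, Fintype.prod_prod_type]
  simp only [apply_ite ν, measure_univ, Finset.prod_ite_irrel, Finset.prod_const_one]
  rw [Finset.prod_ite_mem, Finset.univ_inter, Finset.prod_const]

noncomputable def stripChoices (κ : Type*) [Fintype κ] [DecidableEq κ] (m k : ℕ) :
    Finset (κ → Finset ℤ) :=
  Fintype.piFinset fun _ => (Finset.Ico (0 : ℤ) m).powersetCard k

theorem card_stripChoices (κ : Type*) [Fintype κ] [DecidableEq κ] (m k : ℕ) :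
    (stripChoices κ m k).card = m.choose k ^ Fintype.card κ := by
  simp [stripChoices, Fintype.card_piFinset, Finset.card_powersetCard]

theorem exists_stripChoices_floor_mul_mem {ι κ : Type*} [Fintype κ] [DecidableEq κ]
    {m k : ℕ} (hm : 0 < m) (hkm : k ≤ m) {x : ι × κ → ℝ} (hx : ∀ j, x j ∈ Ico (0 : ℝ) 1)
    {T : Finset ι} (hT : ∀ i, (T.image fun t => ⌊(m : ℝ) * x (t, i)⌋).card ≤ k) :
    ∃ S ∈ stripChoices κ m k, ∀ t ∈ T, ∀ i, ⌊(m : ℝ) * x (t, i)⌋ ∈ S i := by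
  have hcover (i : κ) : ∃ S, (T.image fun t => ⌊(m : ℝ) * x (t, i)⌋) ⊆ S ∧
      S ⊆ Finset.Ico (0 : ℤ) m ∧ S.card = k := by
    refine Finset.exists_subsuperset_card_eq ?_ (hT i) (by simpa using hkm)
    simp only [Finset.image_subset_iff]
    exact fun t _ => (floor_mul_mem_Ico_iff hm).2 (hx (t, i))
  choose S hTS hSm hSk using hcover
  refine ⟨S, Fintype.mem_piFinset.2 fun i => Finset.mem_powersetCard.2 ⟨hSm i, hSk i⟩,
    fun t ht i => hTS i (Finset.mem_image_of_mem _ ht)⟩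

theorem measure_pi_floor_mul_mem_stripChoices {ι κ : Type*} [Fintype ι] [Fintype κ]
    [DecidableEq κ] {m k : ℕ} (hm : 0 < m) {S : κ → Finset ℤ} (hS : S ∈ stripChoices κ m k)
    (T : Finset ι) :
    Measure.pi (fun _ : ι × κ => volume.restrict (Ico (0 : ℝ) 1))
        {x | ∀ t ∈ T, ∀ i, ⌊(m : ℝ) * x (t, i)⌋ ∈ S i} =
      ((k : ℝ≥0∞) / m) ^ (Fintype.card κ * T.card) := by
  have hSi (i : κ) := Finset.mem_powersetCard.1 (Fintype.mem_piFinset.1 hS i)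
  have : IsProbabilityMeasure (volume.restrict (Ico (0 : ℝ) 1)) := ⟨by simp⟩
  refine (measure_pi_setOf_forall_mem _ T fun i => {u | ⌊(m : ℝ) * u⌋ ∈ S i}).trans ?_
  simp only [volume_restrict_Ico_floor_mul_mem hm (hSi _).1, (hSi _).2, Finset.prod_const,
    Finset.card_univ, pow_mul]

theorem strip_covering_union_bound_general (d n m s k : ℕ)
    (hm : 0 < m) (hkm : k ≤ m) :
    (Measure.pi (fun _ : Fin n × Fin d => volume.restrict (Set.Ico (0 : ℝ) 1)))
      {x : Fin n × Fin d → ℝ | ∃ T : Finset (Fin n), T.card = s ∧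
        ∀ i : Fin d, (T.image (fun t => ⌊(m : ℝ) * x (t, i)⌋)).card ≤ k} ≤
      ENNReal.ofReal ((n.choose s : ℝ) * (m.choose k : ℝ) ^ d * ((k : ℝ) / m) ^ (d * s)) := by
  set μ := Measure.pi fun _ : Fin n × Fin d => volume.restrict (Ico (0 : ℝ) 1)
  set cylinder : Finset (Fin n) → (Fin d → Finset ℤ) → Set (Fin n × Fin d → ℝ) :=
    fun T S => {x | ∀ t ∈ T, ∀ i, ⌊(m : ℝ) * x (t, i)⌋ ∈ S i}
  have hbox : ∀ᵐ x ∂μ, ∀ j, x j ∈ Ico (0 : ℝ) 1 :=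
    ae_all_iff.2 fun _ =>
      Measure.tendsto_eval_ae_ae.eventually (ae_restrict_mem measurableSet_Ico)
  have hcover : {x : Fin n × Fin d → ℝ | ∃ T : Finset (Fin n), T.card = s ∧
        ∀ i : Fin d, (T.image (fun t => ⌊(m : ℝ) * x (t, i)⌋)).card ≤ k} ≤ᵐ[μ]
      ⋃ T ∈ Finset.univ.powersetCard s, ⋃ S ∈ stripChoices (Fin d) m k, cylinder T S := by
    filter_upwards [hbox] with x hx ⟨T, hTs, hTk⟩
    obtain ⟨S, hS, hxS⟩ := exists_stripChoices_floor_mul_mem hm hkm hx hTk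
    exact mem_biUnion (by simpa using hTs) (mem_biUnion hS hxS)
  calc μ _ ≤ _ := measure_mono_ae hcover
    _ ≤ ∑ T ∈ Finset.univ.powersetCard s, ∑ S ∈ stripChoices (Fin d) m k, μ (cylinder T S) :=
      (measure_biUnion_finset_le _ _).trans
        (Finset.sum_le_sum fun _ _ => measure_biUnion_finset_le _ _)
    _ = ∑ T ∈ Finset.univ.powersetCard s, ∑ S ∈ stripChoices (Fin d) m k,
          ((k : ℝ≥0∞) / m) ^ (d * s) := by
      refine Finset.sum_congr rfl fun T hT => Finset.sum_congr rfl fun S hS => ?_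
      rw [measure_pi_floor_mul_mem_stripChoices hm hS, Fintype.card_fin,
        (Finset.mem_powersetCard.1 hT).2]
    _ = _ := by
      have hm' : (0 : ℝ) < m := by exact_mod_cast hm
      simp only [Finset.sum_const, card_stripChoices, Finset.card_powersetCard, Finset.card_univ,
        Fintype.card_fin, nsmul_eq_mul]
      rw [ENNReal.ofReal_mul (by positivity), ENNReal.ofReal_mul (by positivity),
        ENNReal.ofReal_pow (by positivity), ENNReal.ofReal_pow (by positivity),
        ENNReal.ofReal_div_of_pos hm', ENNReal.ofReal_natCast, ENNReal.ofReal_natCast,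
        ENNReal.ofReal_natCast, ENNReal.ofReal_natCast]
      push_cast
      ring

/-- Probabilistic core of the strip-covering proposition: for `n` points with
independent uniform coordinates in `d` dimensions, the probability that some set of
`s` points hits at most `k` of the `m` strips in every dimension is at most
`(n choose s)·(m choose k)^d·(k/m)^(d·s)`. -/
theorem strip_covering_union_bound (d n m s k : ℕ)
    (hd : 0 < d) (hn : 0 < n) (hm : 0 < m) (hs : 0 < s) (hk : 0 < k)
    (hkm : k ≤ m) (hsn : s ≤ n) :
    (Measure.pi (fun _ : Fin n × Fin d => volume.restrict (Set.Ico (0 : ℝ) 1)))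
      {x : Fin n × Fin d → ℝ | ∃ T : Finset (Fin n), T.card = s ∧
        ∀ i : Fin d, (T.image (fun t => ⌊(m : ℝ) * x (t, i)⌋)).card ≤ k} ≤
      ENNReal.ofReal ((n.choose s : ℝ) * (m.choose k : ℝ) ^ d * ((k : ℝ) / m) ^ (d * s)) :=
  strip_covering_union_bound_general d n m s k hm hkm
end

section
/- Let G be a finite simple graph with vertex set V, let f : V → ι be any function to a type ι, let D, k be natural numbers and S ⊆ V a set of vertices. Suppose that every vertex v ∈ S has at least D neighbours u in G with f(u) = f(v), and that the image f(S) has at least k elements. Then the external neighbourhood satisfies |N_ext(S)| ≥ k·D − |S|. -/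
open Finset

namespace SimpleGraph

variable {V : Type*} [Fintype V] {G : SimpleGraph V} [DecidableRel G.Adj]

/-- The strips of `T` met by `S` are disjoint, and each contains the same-strip
neighbourhood of a representative vertex of `S`. -/
theorem card_image_mul_le_card_of_neighborFinset_subset {ι : Type*} [DecidableEq ι]
    (f : V → ι) {D : ℕ} {S T : Finset V}
    (hdeg : ∀ v ∈ S, D ≤ #{u ∈ G.neighborFinset v | f u = f v})
    (hT : ∀ v ∈ S, G.neighborFinset v ⊆ T) :
    #(S.image f) * D ≤ #T := by
  have hfiber : ∀ i ∈ S.image f, D ≤ #{u ∈ {u ∈ T | f u ∈ S.image f} | f u = i} := by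
    intro i hi
    obtain ⟨v, hv, rfl⟩ := mem_image.1 hi
    refine (hdeg v hv).trans (card_le_card fun u hu => ?_)
    obtain ⟨hadj, hfu⟩ := mem_filter.1 hu
    exact mem_filter.2 ⟨mem_filter.2 ⟨hT v hv hadj, hfu ▸ hi⟩, hfu⟩
  calc #(S.image f) * D = D * #(S.image f) := Nat.mul_comm _ _
    _ ≤ #{u ∈ T | f u ∈ S.image f} :=
      mul_card_image_le_card_of_maps_to (fun _ hu => (mem_filter.1 hu).2) D hfiber
    _ ≤ #T := card_filter_le _ _

variable [DecidableEq V] (G)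

def extNeighborFinset (S : Finset V) : Finset V :=
  univ.filter fun u => u ∉ S ∧ ∃ v ∈ S, G.Adj u v

variable {G}

theorem neighborFinset_subset_union_extNeighborFinset {S : Finset V} {v : V} (hv : v ∈ S) :
    G.neighborFinset v ⊆ S ∪ G.extNeighborFinset S := by
  intro u hu
  by_cases huS : u ∈ S
  · exact mem_union_left _ huS
  · refine mem_union_right _ (mem_filter.2 ⟨mem_univ u, huS, v, hv, ?_⟩)
    exact ((G.mem_neighborFinset v u).1 hu).symm

end SimpleGraph

/-- Deterministic combination step: if every vertex of `S` has at least `D` neighbours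
with the same `f`-value (strip index), and `f(S)` takes at least `k` values, then the
external neighbourhood of `S` has size at least `k·D − |S|`. -/
theorem ext_neighbourhood_lower_bound {V ι : Type*} [Fintype V] [DecidableEq V]
    [DecidableEq ι] (G : SimpleGraph V) [DecidableRel G.Adj]
    (f : V → ι) (D k : ℕ) (S : Finset V)
    (hdeg : ∀ v ∈ S, D ≤ ((G.neighborFinset v).filter (fun u => f u = f v)).card)
    (himg : k ≤ (S.image f).card) :
    (k : ℤ) * D - S.card ≤
      ((Finset.univ.filter (fun u => u ∉ S ∧ ∃ v ∈ S, G.Adj u v)).card : ℤ) := by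
  have hstrips := SimpleGraph.card_image_mul_le_card_of_neighborFinset_subset f hdeg
    fun _ hv => SimpleGraph.neighborFinset_subset_union_extNeighborFinset hv
  have hk : k * D ≤ (S.image f).card * D := Nat.mul_le_mul_right D himg
  have hunion := card_union_le S (G.extNeighborFinset S)
  change (k : ℤ) * D - S.card ≤ (G.extNeighborFinset S).card
  omega
end
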